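/- Let m ≥ n ≥ 1 and suppose m/n is not an integer prime power (including m ≠ n). Then the matrix Φ_m(C_{Φ_n}) is unimodular over ℤ, i.e., its determinant is ±1. -/

import Mathlib

/-!
`Φ_n` is the characteristic polynomial of its companion matrix `C`, so `Φ_n(C) = 0` and `Φ_m(C)`
is invertible as soon as `Φ_m` and `Φ_n` are coprime in `ℤ[X]`. If they are not, they have a
common root `ζ` in a residue field `ℤ[X]/M`. In characteristic `0` this forces `m = n`; in
characteristic `p`, `ζ` is a primitive root of unity whose order is the prime-to-`p` part of both
`m` and `n`, so `m / n` is a power of `p`.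
-/

open Polynomial Matrix

def companion {R : Type*} [CommRing R] (g : R[X]) :
    Matrix (Fin g.natDegree) (Fin g.natDegree) R :=
  Matrix.of fun i j =>
    if (i : ℕ) = 0 then -g.coeff (g.natDegree - 1 - (j : ℕ))
    else if (i : ℕ) = (j : ℕ) + 1 then 1 else 0

theorem Nat.exists_eq_mul_pow_of_ordCompl_eq {m n p : ℕ} (h : ordCompl[p] m = ordCompl[p] n) :
    ∃ k, m = n * p ^ k ∨ n = m * p ^ k := by
  wlog hle : n.factorization p ≤ m.factorization p generalizing m n
  · obtain ⟨k, hk⟩ := this h.symm (le_of_not_ge hle)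
    exact ⟨k, hk.symm⟩
  refine ⟨m.factorization p - n.factorization p, Or.inl ?_⟩
  calc m = p ^ m.factorization p * ordCompl[p] m := (Nat.ordProj_mul_ordCompl_eq_self m p).symm
    _ = p ^ n.factorization p * ordCompl[p] n * p ^ (m.factorization p - n.factorization p) := by
      rw [h, ← pow_sub_mul_pow p hle]; ring
    _ = n * p ^ (m.factorization p - n.factorization p) := by
      rw [Nat.ordProj_mul_ordCompl_eq_self n p]

theorem Ideal.exists_isMaximal_of_not_isCoprime {R : Type*} [CommRing R] {a b : R}
    (h : ¬IsCoprime a b) : ∃ M : Ideal R, M.IsMaximal ∧ a ∈ M ∧ b ∈ M := by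
  have hI : Ideal.span {a, b} ≠ ⊤ := fun htop =>
    h (by simpa [Ideal.eq_top_iff_one, Ideal.mem_span_pair, IsCoprime] using htop)
  obtain ⟨M, hM, hle⟩ := Ideal.exists_le_maximal _ hI
  exact ⟨M, hM, hle (Ideal.subset_span (by simp)), hle (Ideal.subset_span (by simp))⟩

theorem Polynomial.aeval_quotient_mk_X_eq_zero_iff {R : Type*} [CommRing R] {I : Ideal R[X]}
    {f : R[X]} : aeval (Ideal.Quotient.mk I X) f = 0 ↔ f ∈ I := by
  rw [← Ideal.Quotient.mkₐ_eq_mk R, aeval_algHom_apply, aeval_X_left_apply,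
    Ideal.Quotient.mkₐ_eq_mk, Ideal.Quotient.eq_zero_iff_mem]

theorem Polynomial.isUnit_aeval_of_isCoprime {R A : Type*} [CommRing R] [Ring A] [Algebra R A]
    {f g : R[X]} (h : IsCoprime f g) {x : A} (hx : aeval x g = 0) : IsUnit (aeval x f) := by
  obtain ⟨a, b, hab⟩ := h
  have hinv : aeval x a * aeval x f = 1 := by
    simpa [hx] using congrArg (aeval x) hab
  refine isUnit_iff_exists.mpr ⟨aeval x a, ?_, hinv⟩
  rw [← map_mul, mul_comm, map_mul, hinv]

section Cyclotomic

variable {R : Type*} [CommRing R] [IsDomain R]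

theorem isPrimitiveRoot_ordCompl_of_isRoot_cyclotomic {p : ℕ} [hp : Fact p.Prime] [CharP R p]
    {m : ℕ} (hm : m ≠ 0) {ζ : R} (h : (cyclotomic m R).IsRoot ζ) :
    IsPrimitiveRoot ζ (ordCompl[p] m) := by
  have : NeZero ((ordCompl[p] m : ℕ) : R) := NeZero.of_not_dvd R (Nat.not_dvd_ordCompl hp.out hm)
  rw [← Nat.ordProj_mul_ordCompl_eq_self m p] at h
  exact isRoot_cyclotomic_prime_pow_mul_iff_of_charP.mp h

theorem exists_eq_mul_prime_pow_of_isRoot_cyclotomic {m n : ℕ} (hm : m ≠ 0) (hn : n ≠ 0) {ζ : R}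
    (hζm : (cyclotomic m R).IsRoot ζ) (hζn : (cyclotomic n R).IsRoot ζ) :
    ∃ p k, p.Prime ∧ (m = n * p ^ k ∨ n = m * p ^ k) := by
  rcases CharP.char_is_prime_or_zero R (ringChar R) with hp | h0
  · have := Fact.mk hp
    obtain ⟨k, hk⟩ := Nat.exists_eq_mul_pow_of_ordCompl_eq
      ((isPrimitiveRoot_ordCompl_of_isRoot_cyclotomic hm hζm).unique
        (isPrimitiveRoot_ordCompl_of_isRoot_cyclotomic hn hζn))
    exact ⟨_, k, hp, hk⟩
  · have := (CharP.ringChar_zero_iff_CharZero R).mp h0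
    have : NeZero (m : R) := ⟨Nat.cast_ne_zero.mpr hm⟩
    have : NeZero (n : R) := ⟨Nat.cast_ne_zero.mpr hn⟩
    have hmn := (isRoot_cyclotomic_iff.mp hζm).unique (isRoot_cyclotomic_iff.mp hζn)
    exact ⟨2, 0, Nat.prime_two, by simp [hmn]⟩

end Cyclotomic

theorem isCoprime_cyclotomic_int {m n : ℕ}
    (h : ¬∃ p k, p.Prime ∧ (m = n * p ^ k ∨ n = m * p ^ k)) :
    IsCoprime (cyclotomic m ℤ) (cyclotomic n ℤ) := by
  rcases eq_or_ne m 0 with rfl | hm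
  · simp [isCoprime_one_left]
  rcases eq_or_ne n 0 with rfl | hn
  · simp [isCoprime_one_right]
  by_contra hcop
  obtain ⟨M, hM, hmM, hnM⟩ := Ideal.exists_isMaximal_of_not_isCoprime hcop
  have := hM.isPrime
  have hroot {l : ℕ} (hl : cyclotomic l ℤ ∈ M) :
      (cyclotomic l (ℤ[X] ⧸ M)).IsRoot (Ideal.Quotient.mk M X) := by
    rw [← map_cyclotomic l (algebraMap ℤ (ℤ[X] ⧸ M)), IsRoot.def, eval_map_algebraMap]
    exact aeval_quotient_mk_X_eq_zero_iff.mpr hl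
  exact h (exists_eq_mul_prime_pow_of_isRoot_cyclotomic hm hn (hroot hmM) (hroot hnM))

section Companion

variable {R : Type*} [CommRing R] {g : R[X]}

theorem AdjoinRoot.minpolyGen_powerBasis' (hg : g.Monic) : (powerBasis' hg).minpolyGen = g := by
  nontriviality R
  set pb := powerBasis' hg
  by_contra hne
  have hroot : aeval pb.gen (pb.minpolyGen - g) = 0 := by
    rw [map_sub, pb.aeval_minpolyGen, powerBasis'_gen, aeval_eq, mk_self, sub_zero]
  have hdeg : (pb.minpolyGen - g).degree < pb.dim := by
    have hd : pb.minpolyGen.degree = g.degree := by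
      rw [pb.degree_minpolyGen, degree_eq_natDegree hg.ne_zero]; rfl
    have := degree_sub_lt_left hd pb.minpolyGen_monic.ne_zero
      (by rw [pb.minpolyGen_monic.leadingCoeff, hg.leadingCoeff])
    rwa [pb.degree_minpolyGen] at this
  exact (pb.dim_le_degree_of_root (sub_ne_zero.mpr hne) hroot).not_gt hdeg

theorem companion_eq_transpose_reindex_leftMulMatrix (hg : g.Monic) :
    companion g = (reindex Fin.revPerm Fin.revPerm
      (Algebra.leftMulMatrix (AdjoinRoot.powerBasisAux' hg) (AdjoinRoot.root g)))ᵀ := by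
  ext i j
  -- `(powerBasis' hg).dim` is `g.natDegree` only definitionally, hence the `change`s.
  change _ = Algebra.leftMulMatrix (AdjoinRoot.powerBasis' hg).basis
    (AdjoinRoot.powerBasis' hg).gen j.rev i.rev
  rw [PowerBasis.leftMulMatrix, AdjoinRoot.minpolyGen_powerBasis']
  change (if (i : ℕ) = 0 then _ else _) = (if (i.rev : ℕ) + 1 = g.natDegree then
      -g.coeff j.rev else if (j.rev : ℕ) = i.rev + 1 then 1 else 0)
  simp only [Fin.val_rev]
  grind

theorem charpoly_companion (hg : g.Monic) : (companion g).charpoly = g := by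
  rw [companion_eq_transpose_reindex_leftMulMatrix hg, charpoly_transpose, charpoly_reindex]
  exact (charpoly_leftMulMatrix (AdjoinRoot.powerBasis' hg)).trans
    (by rw [← PowerBasis.minpolyGen_eq, AdjoinRoot.minpolyGen_powerBasis'])

theorem aeval_companion_self (hg : g.Monic) : aeval (companion g) g = 0 := by
  simpa only [charpoly_companion hg] using aeval_self_charpoly (companion g)

end Companion

theorem stmt18_general (m n : ℕ) (hmn : n ≤ m) (hne : m ≠ n)
    (hnp : ¬ ∃ p k : ℕ, p.Prime ∧ 1 ≤ k ∧ m = n * p ^ k) :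
    IsUnit (Polynomial.aeval (companion (Polynomial.cyclotomic n ℤ))
      (Polynomial.cyclotomic m ℤ)).det := by
  have hcop : IsCoprime (cyclotomic m ℤ) (cyclotomic n ℤ) := by
    refine isCoprime_cyclotomic_int ?_
    rintro ⟨p, k, hp, hm_eq | hn_eq⟩
    · rcases Nat.eq_zero_or_pos k with rfl | hk
      · exact hne (by simpa using hm_eq)
      · exact hnp ⟨p, k, hp, hk, hm_eq⟩
    · have hle : m ≤ n := hn_eq ▸ Nat.le_mul_of_pos_right m (pow_pos hp.pos k)
      exact hne (le_antisymm hle hmn)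
  exact (isUnit_iff_isUnit_det _).mp
    (isUnit_aeval_of_isCoprime hcop (aeval_companion_self (cyclotomic.monic n ℤ)))

/-- If `m ≥ n ≥ 1`, `m ≠ n`, and `m/n` is not an integer prime power (i.e. `m` is not
of the form `n·p^k` with `p` prime and `k ≥ 1`), then `Φ_m(C_{Φ_n})` is unimodular
over `ℤ`: its determinant is a unit (`±1`). -/
theorem stmt18 (m n : ℕ) (hn : 1 ≤ n) (hmn : n ≤ m) (hne : m ≠ n)
    (hnp : ¬ ∃ p k : ℕ, p.Prime ∧ 1 ≤ k ∧ m = n * p ^ k) :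
    IsUnit (Polynomial.aeval (companion (Polynomial.cyclotomic n ℤ))
      (Polynomial.cyclotomic m ℤ)).det :=
  stmt18_general m n hmn hne hnp
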